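/- If C is an abelian category and F : C → C is an additive functor preserving cokernels, then the category L_F(C) of F-cochain complexes is an abelian category. -/

import Mathlib

open CategoryTheory CategoryTheory.Limits

universe v u

variable {C : Type u} [Category.{v} C] [Preadditive C]

/-- A cochain complex over an endofunctor `F`: objects `M n` together with
differentials `d n : F (M n) ⟶ M (n+1)` satisfying `F (d n) ≫ d (n+1) = 0`. -/
structure FComplex (C : Type u) [Category.{v} C] [Preadditive C] (F : C ⥤ C) where
  X : ℤ → C
  d : ∀ n : ℤ, F.obj (X n) ⟶ X (n + 1)
  d_comp : ∀ n : ℤ, F.map (d n) ≫ d (n + 1) = 0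

namespace FComplex

variable {F : C ⥤ C}

/-- Morphisms of `F`-cochain complexes. -/
@[ext]
structure Hom (M N : FComplex C F) where
  f : ∀ n : ℤ, M.X n ⟶ N.X n
  comm : ∀ n : ℤ, F.map (f n) ≫ N.d n = M.d n ≫ f (n + 1)

instance : Category (FComplex C F) where
  Hom := Hom
  id M := ⟨fun n => 𝟙 (M.X n), fun n => by simp⟩
  comp φ ψ := ⟨fun n => φ.f n ≫ ψ.f n, fun n => by
    have h := φ.comm n
    rw [F.map_comp, Category.assoc, ψ.comm, ← Category.assoc, h, Category.assoc]⟩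
  id_comp φ := Hom.ext (funext fun n => Category.id_comp (φ.f n))
  comp_id φ := Hom.ext (funext fun n => Category.comp_id (φ.f n))
  assoc φ ψ χ := Hom.ext (funext fun n => Category.assoc (φ.f n) (ψ.f n) (χ.f n))

@[simp] theorem comp_f {M N P : FComplex C F} (φ : M ⟶ N) (ψ : N ⟶ P) (n : ℤ) :
    (φ ≫ ψ).f n = φ.f n ≫ ψ.f n := rfl

@[simp] theorem id_f (M : FComplex C F) (n : ℤ) : (𝟙 M : M ⟶ M).f n = 𝟙 (M.X n) := rfl

end FComplex

/-!
Limits and colimits of `F`-complexes are computed degreewise. For limits this works for any `F`: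
the differential of `lim Mⱼ` is induced by the maps `F (lim Mⱼⁿ) ⟶ F Mⱼⁿ ⟶ Mⱼⁿ⁺¹`. Dually, the
differential of `colim Mⱼ` is induced on `F (colim Mⱼⁿ) = colim F Mⱼⁿ`, which needs `F` to
preserve the colimit; a right exact functor preserves all finite colimits. Kernels and cokernels
being degreewise, so is the coimage-image comparison, which is therefore an isomorphism as in `C`.
-/

namespace FComplex

variable {C : Type u} [Category.{v} C] [Preadditive C] {F : C ⥤ C}

@[ext]
theorem hom_ext {M N : FComplex C F} {φ ψ : M ⟶ N} (h : ∀ n, φ.f n = ψ.f n) : φ = ψ :=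
  Hom.ext (funext h)

variable (F) in
abbrev eval (n : ℤ) : FComplex C F ⥤ C where
  obj M := M.X n
  map φ := φ.f n

theorem isIso_of_isIso_f {M N : FComplex C F} (φ : M ⟶ N) (h : ∀ n, IsIso (φ.f n)) : IsIso φ := by
  refine ⟨⟨⟨fun n => inv (φ.f n), fun n => ?_⟩, by ext; simp, by ext; simp⟩⟩
  rw [← cancel_mono (φ.f (n + 1)), Category.assoc, Category.assoc, IsIso.inv_hom_id,
    Category.comp_id, ← φ.comm, ← F.map_comp_assoc, IsIso.inv_hom_id, F.map_id, Category.id_comp]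

section Preadditive

variable [F.Additive]

instance {M N : FComplex C F} : Zero (M ⟶ N) := ⟨⟨fun _ => 0, fun n => by simp⟩⟩

instance {M N : FComplex C F} : Add (M ⟶ N) :=
  ⟨fun φ ψ => ⟨fun n => φ.f n + ψ.f n, fun n => by simp [φ.comm, ψ.comm]⟩⟩

instance {M N : FComplex C F} : Neg (M ⟶ N) :=
  ⟨fun φ => ⟨fun n => -φ.f n, fun n => by simp [φ.comm]⟩⟩

@[simp] theorem zero_f {M N : FComplex C F} (n : ℤ) : (0 : M ⟶ N).f n = 0 := rfl

@[simp] theorem add_f {M N : FComplex C F} (φ ψ : M ⟶ N) (n : ℤ) : (φ + ψ).f n = φ.f n + ψ.f n :=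
  rfl

@[simp] theorem neg_f {M N : FComplex C F} (φ : M ⟶ N) (n : ℤ) : (-φ).f n = -φ.f n := rfl

instance {M N : FComplex C F} : AddCommGroup (M ⟶ N) where
  add_assoc _ _ _ := by ext; apply add_assoc
  zero_add _ := by ext; apply zero_add
  add_zero _ := by ext; apply add_zero
  add_comm _ _ := by ext; apply add_comm
  neg_add_cancel _ := by ext; apply neg_add_cancel
  nsmul := nsmulRec
  zsmul := zsmulRec

instance : Preadditive (FComplex C F) where
  add_comp _ _ _ _ _ _ := by ext; simp
  comp_add _ _ _ _ _ _ := by ext; simp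

instance (n : ℤ) : (eval F n).Additive where

end Preadditive

section Limits

variable {J : Type*} [Category J] [HasLimitsOfShape J C] (K : J ⥤ FComplex C F)

noncomputable def limitD (n : ℤ) : F.obj (limit (K ⋙ eval F n)) ⟶ limit (K ⋙ eval F (n + 1)) :=
  limit.lift (K ⋙ eval F (n + 1))
    { pt := F.obj (limit (K ⋙ eval F n))
      π :=
        { app j := F.map (limit.π (K ⋙ eval F n) j) ≫ (K.obj j).d n
          naturality j j' u := by
            dsimp
            rw [Category.id_comp, Category.assoc, ← (K.map u).comm, ← F.map_comp_assoc]
            exact congrArg (fun g => F.map g ≫ _) (limit.w (K ⋙ eval F n) u).symm } }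

theorem limitD_π (n : ℤ) (j : J) :
    limitD K n ≫ limit.π (K ⋙ eval F (n + 1)) j =
      F.map (limit.π (K ⋙ eval F n) j) ≫ (K.obj j).d n :=
  limit.lift_π _ _

noncomputable def limitCone : Cone K where
  pt :=
    { X n := limit (K ⋙ eval F n)
      d := limitD K
      d_comp n := limit.hom_ext fun j => by
        rw [Category.assoc, limitD_π, ← F.map_comp_assoc, limitD_π, F.map_comp, Category.assoc,
          (K.obj j).d_comp, comp_zero, zero_comp] }
  π :=
    { app j := ⟨fun n => limit.π (K ⋙ eval F n) j, fun n => (limitD_π K n j).symm⟩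
      naturality j j' u := by
        ext n
        exact (Category.id_comp _).trans (limit.w (K ⋙ eval F n) u).symm }

noncomputable def isLimitLimitCone : IsLimit (limitCone K) where
  lift s := ⟨fun n => limit.lift _ ((eval F n).mapCone s), fun n => limit.hom_ext fun j => by
    dsimp [limitCone]
    rw [Category.assoc, limitD_π, ← F.map_comp_assoc, limit.lift_π, Category.assoc, limit.lift_π]
    exact (s.π.app j).comm n⟩
  fac s j := by ext n; exact limit.lift_π _ _
  uniq s m hm := by
    ext n
    refine limit.hom_ext fun j => ?_
    rw [limit.lift_π]
    exact congrArg (fun φ => φ.f n) (hm j)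

instance : HasLimitsOfShape J (FComplex C F) :=
  ⟨fun K => ⟨⟨⟨_, isLimitLimitCone K⟩⟩⟩⟩

instance (n : ℤ) : PreservesLimitsOfShape J (eval F n) :=
  ⟨fun {K} => preservesLimit_of_preserves_limit_cone (isLimitLimitCone K) (limit.isLimit _)⟩

instance [HasFiniteLimits C] : HasFiniteLimits (FComplex C F) := ⟨fun _ _ _ => inferInstance⟩

end Limits

section Colimits

variable {J : Type*} [Category J] [HasColimitsOfShape J C] [PreservesColimitsOfShape J F]
  (K : J ⥤ FComplex C F)

noncomputable def colimitD (n : ℤ) :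
    F.obj (colimit (K ⋙ eval F n)) ⟶ colimit (K ⋙ eval F (n + 1)) :=
  (isColimitOfPreserves F (colimit.isColimit (K ⋙ eval F n))).desc
    { pt := colimit (K ⋙ eval F (n + 1))
      ι :=
        { app j := (K.obj j).d n ≫ colimit.ι (K ⋙ eval F (n + 1)) j
          naturality j j' u := by
            dsimp
            rw [Category.comp_id, ← Category.assoc, (K.map u).comm, Category.assoc]
            exact congrArg _ (colimit.w (K ⋙ eval F (n + 1)) u) } }

theorem ι_colimitD (n : ℤ) (j : J) :
    F.map (colimit.ι (K ⋙ eval F n) j) ≫ colimitD K n =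
      (K.obj j).d n ≫ colimit.ι (K ⋙ eval F (n + 1)) j :=
  (isColimitOfPreserves F (colimit.isColimit (K ⋙ eval F n))).fac _ j

noncomputable def colimitCocone : Cocone K where
  pt :=
    { X n := colimit (K ⋙ eval F n)
      d := colimitD K
      d_comp n := (isColimitOfPreserves F
          (isColimitOfPreserves F (colimit.isColimit (K ⋙ eval F n)))).hom_ext fun j => by
        dsimp
        rw [comp_zero, ← F.map_comp_assoc, ι_colimitD, F.map_comp, Category.assoc, ι_colimitD,
          ← Category.assoc, (K.obj j).d_comp, zero_comp] }
  ι :=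
    { app j := ⟨fun n => colimit.ι (K ⋙ eval F n) j, fun n => ι_colimitD K n j⟩
      naturality j j' u := by
        ext n
        exact (colimit.w (K ⋙ eval F n) u).trans (Category.comp_id _).symm }

noncomputable def isColimitColimitCocone : IsColimit (colimitCocone K) where
  desc s := ⟨fun n => colimit.desc _ ((eval F n).mapCocone s), fun n =>
    (isColimitOfPreserves F (colimit.isColimit (K ⋙ eval F n))).hom_ext fun j => by
      dsimp [colimitCocone]
      rw [← F.map_comp_assoc, colimit.ι_desc, ← Category.assoc, ι_colimitD, Category.assoc,
        colimit.ι_desc]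
      exact (s.ι.app j).comm n⟩
  fac s j := by ext n; exact colimit.ι_desc _ _
  uniq s m hm := by
    ext n
    refine colimit.hom_ext fun j => ?_
    rw [colimit.ι_desc]
    exact congrArg (fun φ => φ.f n) (hm j)

instance : HasColimitsOfShape J (FComplex C F) :=
  ⟨fun K => ⟨⟨⟨_, isColimitColimitCocone K⟩⟩⟩⟩

instance (n : ℤ) : PreservesColimitsOfShape J (eval F n) :=
  ⟨fun {K} => preservesColimit_of_preserves_colimit_cocone (isColimitColimitCocone K)
    (colimit.isColimit _)⟩

instance [HasFiniteColimits C] [PreservesFiniteColimits F] : HasFiniteColimits (FComplex C F) :=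
  ⟨fun _ _ _ => inferInstance⟩

end Colimits

section Abelian

variable {C : Type u} [Category.{v} C] [Abelian C] {F : C ⥤ C} [F.Additive]
  [PreservesFiniteColimits F]

instance {M N : FComplex C F} (φ : M ⟶ N) : IsIso (Abelian.coimageImageComparison φ) :=
  isIso_of_isIso_f _ fun n => IsIso.of_isIso_fac_right
    (Abelian.PreservesCoimage.hom_coimageImageComparison (eval F n) φ).symm

noncomputable instance : Abelian (FComplex C F) := .ofCoimageImageComparisonIsIso

end Abelian

end FComplex

/-- If `C` is an abelian category and `F : C ⥤ C` is an additive functor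
preserving cokernels, then the category `L_F(C)` of `F`-cochain complexes is abelian. -/
theorem FComplex_abelian {C : Type u} [Category.{v} C] [Abelian C] (F : C ⥤ C) [F.Additive]
    (hF : ∀ {X Y : C} (f : X ⟶ Y), PreservesColimit (parallelPair f 0) F) :
    Nonempty (Abelian (FComplex C F)) := by
  have : PreservesFiniteColimits F := F.preservesFiniteColimits_of_preservesCokernels
  exact ⟨inferInstance⟩
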